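/- arXiv:2412.10886 — 2 statements merged into one kernel-verified Lean document; each statement's English description precedes it below -/
import Mathlib

section
/- Let F(y, y_1, …, y_n, (y_{ij})) := −(ħ²/2m) ( −(∑_i y_i²)/(4y²) + (∑_i y_{ii})/(2y) ). Then for every smooth positive function ρ : ℝ^n → (0,∞), evaluating the partial derivatives of F at (ρ, ∂_iρ, ∂²_{ij}ρ) yields the identity: ρ · (∂F/∂y) − ∑_i ∂_i( ρ · (∂F/∂y_i) ) + ∑_{i,j} ∂²_{ij}( ρ · (∂F/∂y_{ij}) ) = 0. -/
open MeasureTheory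

/-- Partial derivative `∂f/∂x_i` of a scalar function on ℝⁿ. -/
noncomputable def pd {n : ℕ} (i : Fin n) (f : (Fin n → ℝ) → ℝ) (x : Fin n → ℝ) : ℝ :=
  fderiv ℝ f x (Pi.single i 1)

/-- Divergence `∑ i ∂X_i/∂x_i` of a vector field on ℝⁿ. -/
noncomputable def dvg {n : ℕ} (X : (Fin n → ℝ) → (Fin n → ℝ)) (x : Fin n → ℝ) : ℝ :=
  ∑ i, pd i (fun y => X y i) x

/-- Lie bracket `[V,W] = (DW)V − (DV)W` of vector fields on ℝⁿ. -/
noncomputable def lie {n : ℕ} (V W : (Fin n → ℝ) → (Fin n → ℝ)) (x : Fin n → ℝ) :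
    Fin n → ℝ :=
  fun k => ∑ l, (V x l * pd l (fun y => W y k) x - W x l * pd l (fun y => V y k) x)

/-- The function `F(y, y_i, y_{ij}) = −(ħ²/2m)(−(∑ y_i²)/(4y²) + (∑ y_{ii})/(2y))`. -/
noncomputable def Fq {n : ℕ} (ℏ m : ℝ) (y : ℝ) (yi : Fin n → ℝ)
    (yij : Fin n → Fin n → ℝ) : ℝ :=
  -(ℏ ^ 2 / (2 * m)) * (-(∑ i, yi i ^ 2) / (4 * y ^ 2) + (∑ i, yij i i) / (2 * y))

lemma deriv_Fq_y {n : ℕ} (ℏ m : ℝ) (v : Fin n → ℝ) (M : Fin n → Fin n → ℝ)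
    (y : ℝ) (hy : y ≠ 0) :
    deriv (fun t => Fq ℏ m t v M) y
      = -(ℏ^2/(2*m)) * ((∑ i, v i ^ 2)/(2*y^3) - (∑ i, M i i)/(2*y^2)) := by
  have h4 : (4:ℝ)*y^2 ≠ 0 := by simp [hy]
  have h2 : (2:ℝ)*y ≠ 0 := by simp [hy]
  have hd1 := (hasDerivAt_const y (-(∑ i, v i ^ 2))).div
    ((hasDerivAt_pow 2 y).const_mul 4) h4
  have hd2 := (hasDerivAt_const y (∑ i, M i i)).div
    ((hasDerivAt_id y).const_mul 2) h2
  have hd := (hd1.add hd2).const_mul (-(ℏ^2/(2*m)))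
  have : deriv (fun t => Fq ℏ m t v M) y = _ := hd.deriv
  rw [this]
  simp only [id_eq, pow_one, Nat.cast_ofNat]
  rw [div_add_div _ _ (pow_ne_zero 2 h4) (pow_ne_zero 2 h2)]
  congr 1
  field_simp
  ring

lemma hasFDerivAt_sumsq {n : ℕ} (v : Fin n → ℝ) :
    HasFDerivAt (fun v : Fin n → ℝ => ∑ i, v i ^ 2)
      (∑ i : Fin n, (2 * v i) • ContinuousLinearMap.proj (R := ℝ) (φ := fun _ : Fin n => ℝ) i) v := by
  have h : ∀ i ∈ Finset.univ, HasFDerivAt (fun v : Fin n → ℝ => v i ^ 2)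
      ((2 * v i) • ContinuousLinearMap.proj (R := ℝ) (φ := fun _ : Fin n => ℝ) i) v := by
    intro i _
    have h := (ContinuousLinearMap.proj (R := ℝ) (φ := fun _ : Fin n => ℝ) i).hasFDerivAt (x := v)
    have h2 := h.fun_mul h
    simp only [ContinuousLinearMap.proj_apply] at h2
    have : (2 * v i) • ContinuousLinearMap.proj (R := ℝ) (φ := fun _ : Fin n => ℝ) i
        = v i • ContinuousLinearMap.proj (R := ℝ) (φ := fun _ : Fin n => ℝ) i
          + v i • ContinuousLinearMap.proj (R := ℝ) (φ := fun _ : Fin n => ℝ) i := by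
      rw [← add_smul]; ring_nf
    rw [this]
    simpa [pow_two] using h2
  exact HasFDerivAt.fun_sum h

lemma fderiv_Fq_v {n : ℕ} (ℏ m y : ℝ) (v : Fin n → ℝ) (M : Fin n → Fin n → ℝ) (i : Fin n) :
    fderiv ℝ (fun v => Fq ℏ m y v M) v (Pi.single i 1)
      = ℏ^2/(2*m) * (v i / (2*y^2)) := by
  have hd := ((((hasFDerivAt_sumsq v).fun_neg.mul_const ((4*y^2)⁻¹)).add_const
      ((∑ i, M i i)/(2*y))).const_mul (-(ℏ^2/(2*m))))
  have heq : (fun v : Fin n → ℝ => Fq ℏ m y v M) =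
      (fun v : Fin n → ℝ => -(ℏ^2/(2*m)) * ((-∑ i, v i ^ 2) * (4*y^2)⁻¹ + (∑ i, M i i)/(2*y))) := by
    funext w; simp [Fq, neg_div, div_eq_mul_inv]
  rw [heq, hd.fderiv]
  simp [ContinuousLinearMap.sum_apply, Pi.single_apply, mul_ite, Finset.sum_ite_eq]
  left; ring

lemma fderiv_Fq_M {n : ℕ} (ℏ m y : ℝ) (v : Fin n → ℝ) (M : Fin n → Fin n → ℝ) (i j : Fin n) :
    fderiv ℝ (fun M => Fq ℏ m y v M) M (Pi.single i (Pi.single j 1))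
      = -(ℏ^2/(2*m)) * ((if i = j then 1 else 0) / (2*y)) := by
  set L : ((Fin n → Fin n → ℝ)) →L[ℝ] ℝ :=
    ∑ k : Fin n, (ContinuousLinearMap.proj (R := ℝ) (φ := fun _ : Fin n => ℝ) k).comp
      (ContinuousLinearMap.proj (R := ℝ) (φ := fun _ : Fin n => Fin n → ℝ) k) with hLdef
  have hL : HasFDerivAt (fun M : Fin n → Fin n → ℝ => ∑ k, M k k) L M := by
    have h := L.hasFDerivAt (x := M)
    have : ⇑L = fun M : Fin n → Fin n → ℝ => ∑ k, M k k := by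
      funext N; simp [hLdef, ContinuousLinearMap.sum_apply]
    rwa [this] at h
  have hd := ((hL.mul_const ((2*y)⁻¹)).const_add
      ((-∑ p, v p ^ 2) * (4*y^2)⁻¹)).const_mul (-(ℏ^2/(2*m)))
  have heq : (fun M : Fin n → Fin n → ℝ => Fq ℏ m y v M) =
      (fun M : Fin n → Fin n → ℝ =>
        -(ℏ^2/(2*m)) * ((-∑ p, v p ^ 2) * (4*y^2)⁻¹ + (∑ k, M k k) * (2*y)⁻¹)) := by
    funext N; simp [Fq, neg_div, div_eq_mul_inv]
  rw [heq, hd.fderiv]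
  simp [hLdef, ContinuousLinearMap.sum_apply, Pi.single_apply, ite_apply, Finset.sum_ite_eq,
    div_eq_mul_inv]
  split <;> ring

/-- with the partial derivatives of `F` computed formally in the
variables `y, y_i, y_{ij}` and evaluated at `(ρ, ∂_iρ, ∂²_{ij}ρ)`, the Euler–Lagrange
type combination `ρ ∂F/∂y − ∑ ∂_i(ρ ∂F/∂y_i) + ∑ ∂²_{ij}(ρ ∂F/∂y_{ij})` vanishes for
every smooth positive `ρ`. -/
theorem stmt_10 {n : ℕ} (ℏ m : ℝ) (hℏ : 0 < ℏ) (hm : 0 < m)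
    (ρ : (Fin n → ℝ) → ℝ) (hρ : ContDiff ℝ (⊤ : ℕ∞) ρ) (hρ0 : ∀ x, 0 < ρ x) :
    ∀ x : Fin n → ℝ,
      ρ x * deriv (fun y => Fq ℏ m y (fun i => pd i ρ x)
            (fun i j => pd i (fun z => pd j ρ z) x)) (ρ x)
        - (∑ i, pd i (fun z => ρ z *
            fderiv ℝ (fun v => Fq ℏ m (ρ z) v
                (fun p q => pd p (fun w => pd q ρ w) z))
              (fun p => pd p ρ z) (Pi.single i 1)) x)
        + (∑ i, ∑ j, pd i (fun z => pd j (fun w => ρ w *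
            fderiv ℝ (fun M => Fq ℏ m (ρ w) (fun p => pd p ρ w) M)
              (fun p q => pd p (fun s => pd q ρ s) w)
              (Pi.single i (Pi.single j 1))) z) x) = 0 := by
  intro x
  have hx : ρ x ≠ 0 := (hρ0 x).ne'
  have hpdc : ∀ j : Fin n, ContDiff ℝ (⊤ : ℕ∞) (fun z => pd j ρ z) := fun j =>
    (hρ.fderiv_right (by simp)).clm_apply contDiff_const
  -- third (second-order) term vanishes: the integrand is a constant in w
  have h3 : (∑ i : Fin n, ∑ j : Fin n, pd i (fun z => pd j (fun w => ρ w *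
      fderiv ℝ (fun M => Fq ℏ m (ρ w) (fun p => pd p ρ w) M)
        (fun p q => pd p (fun s => pd q ρ s) w)
        (Pi.single i (Pi.single j 1))) z) x) = 0 := by
    apply Finset.sum_eq_zero; intro i _
    apply Finset.sum_eq_zero; intro j _
    have hc : (fun w => ρ w *
        fderiv ℝ (fun M => Fq ℏ m (ρ w) (fun p => pd p ρ w) M)
          (fun p q => pd p (fun s => pd q ρ s) w)
          (Pi.single i (Pi.single j 1)))
        = fun _ : Fin n → ℝ => -(ℏ^2/(2*m)) * (if i = j then 1 else 0) / 2 := by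
      funext w
      rw [fderiv_Fq_M]
      have hw : ρ w ≠ 0 := (hρ0 w).ne'
      field_simp
    rw [hc]
    have : (fun z : Fin n → ℝ => pd j (fun _ : Fin n → ℝ =>
        -(ℏ^2/(2*m)) * (if i = j then 1 else 0) / 2) z) = fun _ => 0 := by
      funext z; simp [pd]
    rw [this]
    simp [pd]
  rw [h3]
  -- middle term
  have h2 : ∀ i : Fin n, pd i (fun z => ρ z *
      fderiv ℝ (fun v => Fq ℏ m (ρ z) v
          (fun p q => pd p (fun w => pd q ρ w) z))
        (fun p => pd p ρ z) (Pi.single i 1)) x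
      = ℏ^2/(2*m) / 2 * ((ρ x * pd i (fun z => pd i ρ z) x
          - pd i ρ x * pd i ρ x) / (ρ x)^2) := by
    intro i
    have hc : (fun z => ρ z *
        fderiv ℝ (fun v => Fq ℏ m (ρ z) v
            (fun p q => pd p (fun w => pd q ρ w) z))
          (fun p => pd p ρ z) (Pi.single i 1))
        = fun z => ℏ^2/(2*m) / 2 * (pd i ρ z * (ρ z)⁻¹) := by
      funext z
      rw [fderiv_Fq_v]
      have hz : ρ z ≠ 0 := (hρ0 z).ne'
      field_simp
    rw [hc]
    have hgi : HasFDerivAt (fun z => pd i ρ z)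
        (fderiv ℝ (fun z => pd i ρ z) x) x :=
      ((hpdc i).differentiable (by simp) x).hasFDerivAt
    have hρx : HasFDerivAt ρ (fderiv ℝ ρ x) x :=
      (hρ.differentiable (by simp) x).hasFDerivAt
    have hinv : HasFDerivAt (fun z => (ρ z)⁻¹)
        ((-((ρ x)^2)⁻¹) • fderiv ℝ ρ x) x :=
      (hasDerivAt_inv hx).comp_hasFDerivAt x hρx
    have hd := (hgi.mul hinv).const_mul (ℏ^2/(2*m) / 2)
    have hfd : fderiv ℝ (fun z => ℏ^2/(2*m) / 2 * (pd i ρ z * (ρ z)⁻¹)) x = _ := hd.fderiv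
    show fderiv ℝ _ x (Pi.single i 1) = _
    rw [hfd]
    simp only [ContinuousLinearMap.smul_apply, ContinuousLinearMap.add_apply,
      smul_eq_mul]
    rw [show pd i (fun z => pd i ρ z) x = fderiv ℝ (fun z => pd i ρ z) x (Pi.single i 1) from rfl,
      show pd i ρ x = fderiv ℝ ρ x (Pi.single i 1) from rfl]
    field_simp
    ring
  rw [Finset.sum_congr rfl (fun i _ => h2 i)]
  -- first term
  rw [deriv_Fq_y ℏ m _ _ _ hx]
  -- algebra
  have hsum : ∑ i : Fin n, ℏ^2/(2*m) / 2 * ((ρ x * pd i (fun z => pd i ρ z) x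
      - pd i ρ x * pd i ρ x) / (ρ x)^2)
      = ℏ^2/(2*m) / 2 * ((ρ x * (∑ i, pd i (fun z => pd i ρ z) x)
          - ∑ i, (pd i ρ x)^2) / (ρ x)^2) := by
    rw [← Finset.mul_sum, ← Finset.sum_div, Finset.sum_sub_distrib, ← Finset.mul_sum]
    simp [pow_two]
  rw [hsum]
  field_simp
  ring
end

section
/- Vanishing of the quantum force average: let ρ : ℝ^n → (0,∞) be a smooth probability density that is Schwartz (together with all derivatives decaying rapidly), and let Q := −(ħ²/2m)(Δ√ρ)/√ρ. Then ∫_{ℝ^n} ρ(x) ∇Q(x) dx = 0. -/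
open MeasureTheory

/-!
With `u = √ρ`, `Q = -(ℏ²/2m) Δu / u` and `ρ ∂ₖ(Δu/u) = u ∂ₖΔu - Δu ∂ₖu = ∑ᵢ ∂ᵢ(u ∂ᵢ∂ₖu - ∂ᵢu ∂ₖu)`,
so `ρ ∂ₖQ` is a divergence. Its vector field equals `∂ᵢ∂ₖρ / 2 - ∂ᵢρ ∂ₖρ / (2ρ)`, which decays
rapidly: Glaeser's inequality `f'(0)² ≤ 4 f(0) (M + f(0))` for `f ≥ 0` with `|f''| ≤ M` on `[-1, 1]`
bounds `(∂ᵢρ)² / ρ` by the second derivatives of `ρ` near the point. By the divergence theorem the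
integral over `[-R, R]ⁿ` is then `O(1/R)`. If `ρ ∂ₖQ` is not integrable, its integral is `0` by
convention.
-/

open Set Filter Topology
open scoped ContDiff LineDeriv SchwartzMap

noncomputable def grad {n : ℕ} (f : (Fin n → ℝ) → ℝ) (y : Fin n → ℝ) : Fin n → ℝ :=
  fun i => pd i f y

/-- The quantum (Bohm) stress tensor up to the factor `ℏ²/2m`, written through `ρ` rather than
`√ρ` so that its decay follows from that of `ρ`. -/
noncomputable def quantumStress {n : ℕ} (ρ : (Fin n → ℝ) → ℝ) (k : Fin n) (y : Fin n → ℝ) :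
    Fin n → ℝ :=
  fun i => pd i (pd k ρ) y / 2 - pd i ρ y * pd k ρ y / (2 * ρ y)

section PartialDerivatives

variable {n : ℕ} {f g : (Fin n → ℝ) → ℝ} {x : Fin n → ℝ}

lemma pd_sub (hf : DifferentiableAt ℝ f x) (hg : DifferentiableAt ℝ g x) (i : Fin n) :
    pd i (fun y => f y - g y) x = pd i f x - pd i g x := by
  simp [pd, fderiv_fun_sub hf hg]

lemma pd_mul (hf : DifferentiableAt ℝ f x) (hg : DifferentiableAt ℝ g x) (i : Fin n) :
    pd i (fun y => f y * g y) x = f x * pd i g x + pd i f x * g x := by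
  simp [pd, fderiv_fun_mul hf hg, mul_comm]

lemma pd_const_mul (hf : DifferentiableAt ℝ f x) (c : ℝ) (i : Fin n) :
    pd i (fun y => c * f y) x = c * pd i f x := by
  simp [pd, fderiv_const_mul hf c]

lemma pd_div (hf : DifferentiableAt ℝ f x) (hg : DifferentiableAt ℝ g x) (hgx : g x ≠ 0)
    (i : Fin n) :
    pd i (fun y => f y / g y) x = (pd i f x * g x - f x * pd i g x) / g x ^ 2 := by
  have hinv : HasFDerivAt (fun y => (g y)⁻¹) ((-(g x ^ 2)⁻¹) • fderiv ℝ g x) x :=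
    (hasDerivAt_inv hgx).comp_hasFDerivAt x hg.hasFDerivAt
  simp only [div_eq_mul_inv]
  rw [pd_mul (g := fun y => (g y)⁻¹) hf (hg.inv hgx), pd, hinv.fderiv]
  simp only [pd, FunLike.coe_smul, Pi.smul_apply, smul_eq_mul]
  field_simp
  ring

lemma pd_sum {ι : Type*} (s : Finset ι) {F : ι → (Fin n → ℝ) → ℝ}
    (hF : ∀ j ∈ s, DifferentiableAt ℝ (F j) x) (i : Fin n) :
    pd i (fun y => ∑ j ∈ s, F j y) x = ∑ j ∈ s, pd i (F j) x := by
  simp [pd, fderiv_fun_sum hF]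

lemma ContDiff.pd (hf : ContDiff ℝ ∞ f) (i : Fin n) : ContDiff ℝ ∞ (pd i f) :=
  (hf.fderiv_right le_rfl).clm_apply contDiff_const

lemma pd_pd_comm (hf : ContDiff ℝ ∞ f) (i j : Fin n) : pd i (pd j f) x = pd j (pd i f) x := by
  have hsymm := hf.contDiffAt.isSymmSndFDerivAt (x := x) <| by
    simp only [minSmoothness_of_isRCLikeNormedField]
    exact WithTop.coe_le_coe.2 le_top
  have hd : DifferentiableAt ℝ (fderiv ℝ f) x :=
    (hf.fderiv_right (m := ∞) le_rfl).differentiable (by simp) x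
  change fderiv ℝ (fun y => fderiv ℝ f y (Pi.single j 1)) x (Pi.single i 1) =
    fderiv ℝ (fun y => fderiv ℝ f y (Pi.single i 1)) x (Pi.single j 1)
  simpa [fderiv_clm_apply hd (differentiableAt_const _)] using
    hsymm (Pi.single i 1) (Pi.single j 1)

end PartialDerivatives

section QuantumPotential

variable {n : ℕ} {u : (Fin n → ℝ) → ℝ}

lemma ContDiff.dvg_grad (hu : ContDiff ℝ ∞ u) : ContDiff ℝ ∞ (dvg (grad u)) :=
  ContDiff.sum fun i _ => (hu.pd i).pd i

lemma quantumStress_mul_self (hu : ContDiff ℝ ∞ u) (hu0 : ∀ y, u y ≠ 0) (k : Fin n) :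
    quantumStress (fun y => u y * u y) k =
      fun y i => u y * pd i (pd k u) y - pd i u y * pd k u y := by
  have hdu : Differentiable ℝ u := hu.differentiable (by simp)
  have hdpd : ∀ j, Differentiable ℝ (pd j u) := fun j => (hu.pd j).differentiable (by simp)
  have hpd : ∀ j, pd j (fun y => u y * u y) = fun y => 2 * (u y * pd j u y) := fun j => by
    funext y
    rw [pd_mul (hdu y) (hdu y)]
    ring
  funext y i
  have hpd2 : pd i (pd k fun y => u y * u y) y =
      2 * (u y * pd i (pd k u) y + pd i u y * pd k u y) := by
    rw [hpd k, pd_const_mul (f := fun y => u y * pd k u y) ((hdu y).mul (hdpd k y)),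
      pd_mul (hdu y) (hdpd k y)]
  simp only [quantumStress]
  rw [hpd2, hpd i, hpd k]
  field_simp [hu0 y]
  ring

lemma dvg_mul_pd_pd_sub_pd_mul_pd (hu : ContDiff ℝ ∞ u) (k : Fin n) (x : Fin n → ℝ) :
    dvg (fun y i => u y * pd i (pd k u) y - pd i u y * pd k u y) x =
      u x * pd k (dvg (grad u)) x - dvg (grad u) x * pd k u x := by
  have hdiff : ∀ {f : (Fin n → ℝ) → ℝ}, ContDiff ℝ ∞ f → DifferentiableAt ℝ f x := fun hf =>
    hf.differentiable (by simp) x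
  have hcomm : ∀ i, pd i (pd i (pd k u)) x = pd k (pd i (pd i u)) x := fun i => by
    rw [show pd i (pd k u) = pd k (pd i u) from funext fun y => pd_pd_comm hu i k]
    exact pd_pd_comm (hu.pd i) i k
  have hterm : ∀ i, pd i (fun y => u y * pd i (pd k u) y - pd i u y * pd k u y) x =
      u x * pd k (pd i (pd i u)) x - pd i (pd i u) x * pd k u x := fun i => by
    rw [pd_sub (hdiff (hu.mul ((hu.pd k).pd i))) (hdiff ((hu.pd i).mul (hu.pd k))),
      pd_mul (hdiff hu) (hdiff ((hu.pd k).pd i)), pd_mul (hdiff (hu.pd i)) (hdiff (hu.pd k)),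
      hcomm]
    ring
  have hlap : pd k (dvg (grad u)) x = ∑ i, pd k (pd i (pd i u)) x :=
    pd_sum _ (fun i _ => hdiff ((hu.pd i).pd i)) k
  simp only [dvg, hterm, hlap, Finset.sum_sub_distrib, Finset.mul_sum, Finset.sum_mul]
  rfl

lemma mul_self_mul_pd_dvg_grad_div_eq_dvg_quantumStress (hu : ContDiff ℝ ∞ u)
    (hu0 : ∀ y, u y ≠ 0) (k : Fin n) (x : Fin n → ℝ) :
    u x * u x * pd k (fun y => dvg (grad u) y / u y) x =
      dvg (quantumStress (fun y => u y * u y) k) x := by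
  rw [quantumStress_mul_self hu hu0, dvg_mul_pd_pd_sub_pd_mul_pd hu,
    pd_div (hu.dvg_grad.differentiable (by simp) x) (hu.differentiable (by simp) x) (hu0 x)]
  field_simp [hu0 x]

lemma contDiff_quantumStress {n : ℕ} {ρ : (Fin n → ℝ) → ℝ} (hρ : ContDiff ℝ ∞ ρ)
    (hρ0 : ∀ y, ρ y ≠ 0) (k i : Fin n) : ContDiff ℝ ∞ fun y => quantumStress ρ k y i :=
  (((hρ.pd k).pd i).div_const 2).sub
    (((hρ.pd i).mul (hρ.pd k)).div (contDiff_const.mul hρ) fun y =>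
      mul_ne_zero two_ne_zero (hρ0 y))

end QuantumPotential

lemma abs_sub_sub_mul_le_of_abs_deriv2_le {f f' f'' : ℝ → ℝ} {M t : ℝ}
    (hf : ∀ s ∈ uIcc 0 t, HasDerivAt f (f' s) s)
    (hf' : ∀ s ∈ uIcc 0 t, HasDerivAt f' (f'' s) s) (hM : ∀ s ∈ uIcc 0 t, |f'' s| ≤ M) :
    |f t - f 0 - t * f' 0| ≤ M * t ^ 2 := by
  have hderiv : ∀ s ∈ uIcc 0 t, |f' s - f' 0| ≤ M * |t| := fun s hs => by
    have hsub : uIcc 0 s ⊆ uIcc 0 t := uIcc_subset_uIcc_left hs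
    have h := (convex_uIcc 0 s).norm_image_sub_le_of_norm_hasDerivWithin_le
      (fun r hr => (hf' r (hsub hr)).hasDerivWithinAt) (fun r hr => hM r (hsub hr))
      left_mem_uIcc right_mem_uIcc
    have hst : |s| ≤ |t| := by simpa using abs_sub_left_of_mem_uIcc hs
    have hM0 : 0 ≤ M := (abs_nonneg _).trans (hM 0 left_mem_uIcc)
    simp only [Real.norm_eq_abs, sub_zero] at h
    exact h.trans (mul_le_mul_of_nonneg_left hst hM0)
  have h := (convex_uIcc 0 t).norm_image_sub_le_of_norm_hasDerivWithin_le
    (f := fun s => f s - s * f' 0)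
    (fun s hs => ((hf s hs).sub (hasDerivAt_mul_const (f' 0))).hasDerivWithinAt) hderiv
    left_mem_uIcc right_mem_uIcc
  simp only [Real.norm_eq_abs, sub_zero, zero_mul] at h
  calc |f t - f 0 - t * f' 0| = |f t - t * f' 0 - f 0| := by ring_nf
    _ ≤ M * |t| * |t| := h
    _ = M * t ^ 2 := by rw [mul_assoc, ← abs_mul, abs_mul_self, sq]

lemma sq_le_of_forall_quadratic_nonneg {a b M : ℝ} (ha : 0 ≤ a)
    (h : ∀ t ∈ Icc (-1 : ℝ) 1, 0 ≤ a + b * t + M * t ^ 2) : b ^ 2 ≤ 4 * a * (M + a) := by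
  have hpos := h 1 (by norm_num)
  have hneg := h (-1) (by norm_num)
  rcases le_or_gt |b| (2 * M) with hb | hb
  · rcases (abs_nonneg b).trans hb |>.eq_or_lt with hM | hM
    · have : b = 0 := abs_eq_zero.1 (by linarith [abs_nonneg b])
      subst this
      nlinarith
    · have hmem : -b / (2 * M) ∈ Icc (-1 : ℝ) 1 := by
        rw [mem_Icc, ← abs_le, abs_div, abs_neg, abs_of_pos hM, div_le_one hM]
        exact hb
      have hmin := h _ hmem
      have hval : a + b * (-b / (2 * M)) + M * (-b / (2 * M)) ^ 2 = a - b ^ 2 / (4 * M) := by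
        field_simp
        ring
      rw [hval, sub_nonneg, div_le_iff₀ (by linarith)] at hmin
      nlinarith
  · cases abs_cases b <;> nlinarith

lemma sq_deriv_le_of_nonneg {f f' f'' : ℝ → ℝ} {M : ℝ}
    (hf : ∀ t ∈ Icc (-1 : ℝ) 1, HasDerivAt f (f' t) t)
    (hf' : ∀ t ∈ Icc (-1 : ℝ) 1, HasDerivAt f' (f'' t) t)
    (hf0 : ∀ t ∈ Icc (-1 : ℝ) 1, 0 ≤ f t) (hM : ∀ t ∈ Icc (-1 : ℝ) 1, |f'' t| ≤ M) :
    f' 0 ^ 2 ≤ 4 * f 0 * (M + f 0) := by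
  refine sq_le_of_forall_quadratic_nonneg (hf0 0 (by norm_num)) fun t ht => ?_
  have hsub : uIcc 0 t ⊆ Icc (-1) 1 := ordConnected_Icc.uIcc_subset (by norm_num) ht
  have htaylor := abs_sub_sub_mul_le_of_abs_deriv2_le (fun s hs => hf s (hsub hs))
    (fun s hs => hf' s (hsub hs)) (fun s hs => hM s (hsub hs))
  have := hf0 t ht
  linarith [(abs_le.1 htaylor).2, mul_comm t (f' 0)]

section Decay

lemma SchwartzMap.exists_abs_le_div_one_add_norm_pow {E : Type*} [NormedAddCommGroup E]
    [NormedSpace ℝ E] (f : 𝓢(E, ℝ)) (N : ℕ) :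
    ∃ C, 0 ≤ C ∧ ∀ x, |f x| ≤ C / (1 + ‖x‖) ^ N := by
  refine ⟨2 ^ N * (Finset.Iic (N, 0)).sup (fun m => SchwartzMap.seminorm ℝ m.1 m.2) f,
    by positivity, fun x => ?_⟩
  have h := SchwartzMap.one_add_le_sup_seminorm_apply (𝕜 := ℝ) (m := (N, 0)) le_rfl le_rfl f x
  rw [norm_iteratedFDeriv_zero, Real.norm_eq_abs] at h
  rw [le_div_iff₀ (by positivity)]
  linarith

lemma div_one_add_norm_pow_le {E : Type*} [SeminormedAddCommGroup E] {C : ℝ} (hC : 0 ≤ C)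
    (N : ℕ) {x y : E} (h : ‖y - x‖ ≤ 1) :
    C / (1 + ‖y‖) ^ N ≤ 2 ^ N * C / (1 + ‖x‖) ^ N := by
  rw [div_le_div_iff₀ (by positivity) (by positivity), mul_comm (2 ^ N), mul_assoc, ← mul_pow]
  have : ‖x‖ ≤ ‖y‖ + 1 := by
    linarith [norm_sub_norm_le x y, norm_sub_rev x y]
  gcongr
  linarith [norm_nonneg y]

variable {n : ℕ}

lemma sq_pd_le {ρ : (Fin n → ℝ) → ℝ} (hρ : ContDiff ℝ ∞ ρ) (hρ0 : ∀ x, 0 ≤ ρ x) (j : Fin n)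
    {C : ℝ} {N : ℕ} (hC0 : 0 ≤ C) (hC : ∀ y, |pd j (pd j ρ) y| ≤ C / (1 + ‖y‖) ^ N)
    (x : Fin n → ℝ) :
    pd j ρ x ^ 2 ≤ 4 * ρ x * (2 ^ N * C / (1 + ‖x‖) ^ N + ρ x) := by
  set v : Fin n → ℝ := Pi.single j 1
  have hline : ∀ {g : (Fin n → ℝ) → ℝ}, ContDiff ℝ ∞ g → ∀ t : ℝ,
      HasDerivAt (fun s : ℝ => g (x + s • v)) (pd j g (x + t • v)) t := fun hg t =>
    (hg.differentiable (by simp) _).hasFDerivAt.comp_hasDerivAt t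
      (by simpa using ((hasDerivAt_id t).smul_const v).const_add x)
  have hbound : ∀ t ∈ Icc (-1 : ℝ) 1,
      |pd j (pd j ρ) (x + t • v)| ≤ 2 ^ N * C / (1 + ‖x‖) ^ N := fun t ht => by
    refine (hC _).trans (div_one_add_norm_pow_le hC0 N ?_)
    rw [add_sub_cancel_left, norm_smul, Pi.norm_single, norm_one, mul_one, Real.norm_eq_abs,
      abs_le]
    exact ht
  simpa using sq_deriv_le_of_nonneg (fun t _ => hline hρ t) (fun t _ => hline (hρ.pd j) t)
    (fun t _ => hρ0 _) hbound

lemma quantumStress_decay (ρ : 𝓢(Fin n → ℝ, ℝ)) (hρ0 : ∀ x, 0 ≤ ρ x) (k i : Fin n) (N : ℕ) :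
    ∃ C, ∀ x, |quantumStress ρ k x i| ≤ C / (1 + ‖x‖) ^ N := by
  set e : Fin n → Fin n → ℝ := fun j => Pi.single j 1
  obtain ⟨C₀, -, hC₀⟩ := ρ.exists_abs_le_div_one_add_norm_pow N
  obtain ⟨Cik, -, hCik⟩ := (∂_{e i} (∂_{e k} ρ)).exists_abs_le_div_one_add_norm_pow N
  obtain ⟨Cii, hCii0, hCii⟩ := (∂_{e i} (∂_{e i} ρ)).exists_abs_le_div_one_add_norm_pow N
  obtain ⟨Ckk, hCkk0, hCkk⟩ := (∂_{e k} (∂_{e k} ρ)).exists_abs_le_div_one_add_norm_pow N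
  refine ⟨Cik / 2 + 2 ^ N * Cii + 2 ^ N * Ckk + 2 * C₀, fun x => ?_⟩
  have hρ : ContDiff ℝ ∞ ρ := ρ.smooth ⊤
  set Mi := 2 ^ N * Cii / (1 + ‖x‖) ^ N
  set Mk := 2 ^ N * Ckk / (1 + ‖x‖) ^ N
  have hai := sq_pd_le hρ hρ0 i hCii0 hCii x
  have hbk := sq_pd_le hρ hρ0 k hCkk0 hCkk x
  have hMi : 0 ≤ Mi := by positivity
  have hMk : 0 ≤ Mk := by positivity
  have hcross : |pd i ρ x * pd k ρ x / (2 * ρ x)| ≤ Mi + Mk + 2 * ρ x := by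
    rcases (hρ0 x).eq_or_lt with h0 | hpos
    · rw [← h0, mul_zero, div_zero, abs_zero]
      linarith [hρ0 x]
    rw [abs_div, abs_mul (pd i ρ x), abs_of_pos (show 0 < 2 * ρ x by positivity),
      div_le_iff₀ (by positivity)]
    nlinarith [sq_nonneg (|pd i ρ x| - |pd k ρ x|), sq_abs (pd i ρ x), sq_abs (pd k ρ x)]
  calc |quantumStress ρ k x i|
      ≤ |pd i (pd k ρ) x / 2| + |pd i ρ x * pd k ρ x / (2 * ρ x)| := abs_sub _ _
    _ ≤ Cik / (1 + ‖x‖) ^ N / 2 + (Mi + Mk + 2 * (C₀ / (1 + ‖x‖) ^ N)) := by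
        rw [abs_div, abs_two]
        gcongr
        · exact hCik x
        · exact hcross.trans (by gcongr; exact (le_abs_self _).trans (hC₀ x))
    _ = (Cik / 2 + 2 ^ N * Cii + 2 ^ N * Ckk + 2 * C₀) / (1 + ‖x‖) ^ N := by ring

end Decay

lemma norm_setIntegral_insertNth_le {m : ℕ} {H : (Fin (m + 1) → ℝ) → ℝ} {C : ℝ}
    (hH : ∀ z, |H z| ≤ C / (1 + ‖z‖) ^ (m + 1)) (i : Fin (m + 1)) {R r : ℝ} (hR : 0 ≤ R)
    (hr : |r| = R) :
    ‖∫ y in Icc (fun _ => -R) (fun _ => R), H (i.insertNth r y)‖ ≤ 2 ^ m * C / (1 + R) := by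
  have hC : 0 ≤ C := by simpa using (abs_nonneg _).trans (hH 0)
  have hface : ∀ y, ‖H (i.insertNth r y)‖ ≤ C / (1 + R) ^ (m + 1) := fun y => by
    refine (hH _).trans (div_le_div_of_nonneg_left hC (by positivity) ?_)
    gcongr
    simpa [hr] using norm_le_pi_norm (i.insertNth (α := fun _ => ℝ) r y) i
  have hvol : volume.real (Icc (fun _ : Fin m => -R) (fun _ => R)) = (2 * R) ^ m := by
    rw [measureReal_def, Real.volume_Icc_pi_toReal (fun _ => by linarith)]
    simp [two_mul]
  refine (norm_setIntegral_le_of_norm_le_const measure_Icc_lt_top fun y _ => hface y).trans ?_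
  rw [hvol, pow_succ, div_mul_eq_mul_div, div_le_div_iff₀ (by positivity) (by positivity)]
  calc C * (2 * R) ^ m * (1 + R) ≤ C * (2 * (1 + R)) ^ m * (1 + R) := by gcongr; linarith
    _ = 2 ^ m * C * ((1 + R) ^ m * (1 + R)) := by rw [mul_pow]; ring

lemma integral_dvg_eq_zero_of_decay {n : ℕ} {X : (Fin n → ℝ) → Fin n → ℝ}
    (hX : ∀ i, Differentiable ℝ fun y => X y i)
    (hdecay : ∀ i, ∃ C, ∀ y, |X y i| ≤ C / (1 + ‖y‖) ^ n) (hint : Integrable (dvg X)) :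
    ∫ x, dvg X x = 0 := by
  cases n with
  | zero => simp [dvg]
  | succ m =>
  choose C hC using hdecay
  set box : ℝ → Set (Fin (m + 1) → ℝ) := fun R => Icc (fun _ => -R) (fun _ => R)
  have hunion : ⋃ R, box R = univ := eq_univ_of_forall fun x => mem_iUnion.2
    ⟨‖x‖, fun j => (abs_le.1 (norm_le_pi_norm x j)).1, fun j => (abs_le.1 (norm_le_pi_norm x j)).2⟩
  have hmono : Monotone box := fun R S hRS =>
    Icc_subset_Icc (fun _ => neg_le_neg hRS) fun _ => hRS
  have hlim : Tendsto (fun R => ∫ x in box R, dvg X x) atTop (𝓝 (∫ x, dvg X x)) := by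
    have h := tendsto_setIntegral_of_monotone (fun R => measurableSet_Icc) hmono
      (by rw [hunion]; exact hint.integrableOn)
    rwa [hunion, setIntegral_univ] at h
  have hbound : ∀ R ≥ 0, ‖∫ x in box R, dvg X x‖ ≤ (∑ i, 2 * (2 ^ m * C i)) / (1 + R) := by
    intro R hR
    rw [show ∫ x in box R, dvg X x = _ from integral_divergence_of_hasFDerivAt_off_countable'
      (fun _ => -R) (fun _ => R) (fun _ => by linarith) (fun i y => X y i)
      (fun i y => fderiv ℝ (fun y => X y i) y) ∅ countable_empty
      (fun i => (hX i).continuous.continuousOn) (fun y _ i => (hX i y).hasFDerivAt)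
      hint.integrableOn, Finset.sum_div]
    refine (norm_sum_le _ _).trans (Finset.sum_le_sum fun i _ => ?_)
    have hface := fun r (hr : |r| = R) => norm_setIntegral_insertNth_le (hC i) i hR hr
    exact (norm_sub_le _ _).trans ((add_le_add (hface R (abs_of_nonneg hR))
      (hface (-R) (by rw [abs_neg, abs_of_nonneg hR]))).trans_eq (by ring))
  have hzero : Tendsto (fun R => ∫ x in box R, dvg X x) atTop (𝓝 0) :=
    squeeze_zero_norm' ((eventually_ge_atTop 0).mono hbound)
      (tendsto_const_nhds.div_atTop (tendsto_atTop_add_const_left _ 1 tendsto_id))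
  exact tendsto_nhds_unique hlim hzero

theorem stmt_14_general {n : ℕ} (ℏ m : ℝ)
    (ρ : SchwartzMap (Fin n → ℝ) ℝ)
    (hρ0 : ∀ x, 0 < ρ x)
    (Q : (Fin n → ℝ) → ℝ)
    (hQ : ∀ x, Q x = -(ℏ ^ 2 / (2 * m)) *
      ((∑ i, pd i (fun z => pd i (fun w => Real.sqrt (ρ w)) z) x)
        / Real.sqrt (ρ x))) :
    ∀ k : Fin n, ∫ x : Fin n → ℝ, ρ x * pd k Q x = 0 := by
  intro k
  set c := ℏ ^ 2 / (2 * m)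
  set u : (Fin n → ℝ) → ℝ := fun w => √(ρ w)
  have hρ : ContDiff ℝ ∞ ρ := ρ.smooth ⊤
  have hu : ContDiff ℝ ∞ u := contDiff_iff_contDiffAt.2 fun y =>
    (Real.contDiffAt_sqrt (hρ0 y).ne').comp y hρ.contDiffAt
  have hu0 : ∀ y, u y ≠ 0 := fun y => (Real.sqrt_pos.2 (hρ0 y)).ne'
  have hρu : ⇑ρ = fun y => u y * u y := funext fun y => (Real.mul_self_sqrt (hρ0 y).le).symm
  have hforce : ∀ x, ρ x * pd k Q x = -c * dvg (quantumStress ρ k) x := fun x => by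
    rw [show Q = fun y => -c * (dvg (grad u) y / u y) from funext hQ,
      pd_const_mul (f := fun y => dvg (grad u) y / u y)
        ((hu.dvg_grad.div hu hu0).differentiable (by simp) x), hρu,
      ← mul_self_mul_pd_dvg_grad_div_eq_dvg_quantumStress hu hu0]
    ring
  have hstress : ∫ x, dvg (quantumStress ρ k) x = 0 := by
    by_cases hint : Integrable (dvg (quantumStress ρ k))
    · exact integral_dvg_eq_zero_of_decay
        (fun i => (contDiff_quantumStress hρ (fun y => (hρ0 y).ne') k i).differentiable (by simp))
        (fun i => quantumStress_decay ρ (fun x => (hρ0 x).le) k i n) hint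
    · exact integral_undef hint
  simp_rw [hforce, integral_const_mul, hstress, mul_zero]

/-- vanishing of the average quantum force: for a strictly positive
Schwartz probability density `ρ` and `Q := −(ħ²/2m)(Δ√ρ)/√ρ`, one has
`∫ ρ ∇Q = 0`. -/
theorem stmt_14 {n : ℕ} (ℏ m : ℝ) (hℏ : 0 < ℏ) (hm : 0 < m)
    (ρ : SchwartzMap (Fin n → ℝ) ℝ)
    (hρ0 : ∀ x, 0 < ρ x)
    (hρ1 : ∫ x : Fin n → ℝ, ρ x = 1)
    (Q : (Fin n → ℝ) → ℝ)
    (hQ : ∀ x, Q x = -(ℏ ^ 2 / (2 * m)) *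
      ((∑ i, pd i (fun z => pd i (fun w => Real.sqrt (ρ w)) z) x)
        / Real.sqrt (ρ x))) :
    ∀ k : Fin n, ∫ x : Fin n → ℝ, ρ x * pd k Q x = 0 :=
  stmt_14_general ℏ m ρ hρ0 Q hQ
end
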